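/- The function μ∞ is the inverse of the constant function 1 under the infinitary convolution: for every n ≥ 1, ∑_{d |∞ n} μ∞(d) equals 1 if n = 1 and 0 otherwise. -/

import Mathlib

/-- The binary digit sum (number of ones in the binary expansion). -/
def s₂ (n : ℕ) : ℕ := (Nat.digits 2 n).sum

lemma s2_rec (n : ℕ) : s₂ n = n % 2 + s₂ (n / 2) := by
  rcases Nat.eq_zero_or_pos n with rfl | h
  · simp [s₂]
  · rw [s₂, Nat.digits_def' (by norm_num : (1:ℕ) < 2) h]; rfl

lemma s2_two_pow (b : ℕ) : s₂ (2 ^ b) = 1 := by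
  induction b with
  | zero => simp [s₂]
  | succ b ih =>
    rw [s2_rec]
    have h2 : (2:ℕ) ^ (b+1) = 2 * 2 ^ b := by ring
    rw [h2]
    simp [Nat.mul_div_cancel_left, ih]

lemma neg_one_s2_xor : ∀ m k : ℕ, ((-1:ℤ)) ^ s₂ (m ^^^ k) = (-1) ^ s₂ m * (-1) ^ s₂ k := by
  intro m
  induction m using Nat.strong_induction_on with
  | _ m ih =>
    intro k
    rcases Nat.eq_zero_or_pos m with rfl | hm
    · simp [s₂]
    have key : (m ^^^ k) % 2 = (m % 2 + k % 2) % 2 := by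
      have h := @Nat.xor_mod_two_eq_one m k
      omega
    have h2 : (-1:ℤ) ^ ((m ^^^ k) % 2) = (-1) ^ (m % 2) * (-1) ^ (k % 2) := by
      rcases Nat.mod_two_eq_zero_or_one m with h1 | h1 <;>
        rcases Nat.mod_two_eq_zero_or_one k with h3 | h3 <;>
        rw [key, h1, h3] <;> norm_num
    rw [s2_rec (m ^^^ k), s2_rec m, s2_rec k, pow_add, pow_add, pow_add,
      Nat.xor_div_two, ih (m / 2) (Nat.div_lt_self hm one_lt_two) (k / 2), h2]
    ring

lemma submask_iff {a w : ℕ} : a &&& w = a ↔ ∀ i, a.testBit i = true → w.testBit i = true := by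
  constructor
  · intro h i hi
    have := congrArg (Nat.testBit · i) h
    simp only [Nat.testBit_and, hi, Bool.true_and] at this
    exact this
  · intro h
    apply Nat.eq_of_testBit_eq
    intro i
    rw [Nat.testBit_and]
    cases hai : a.testBit i
    · simp
    · simp [h i hai]

lemma le_of_submask {a w : ℕ} (h : a &&& w = a) : a ≤ w := h ▸ Nat.and_le_right

/-- The modified Möbius function `μ∞`. -/
def muInf (n : ℕ) : ℤ := n.factorization.prod fun _ ν => (-1) ^ s₂ ν

lemma muInf_mul_pow {p c : ℕ} (hp : p.Prime) (hc : c ≠ 0) (hpc : ¬ p ∣ c) (j : ℕ) :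
    muInf (c * p ^ j) = muInf c * (-1) ^ s₂ j := by
  have hpj : p ^ j ≠ 0 := pow_ne_zero _ hp.pos.ne'
  rw [muInf, Nat.factorization_mul hc hpj, hp.factorization_pow,
    Finsupp.prod_add_index_of_disjoint, muInf, Finsupp.prod_single_index]
  · simp [s₂]
  · rw [Finset.disjoint_right]
    intro q hq
    have hqp : q = p := by
      by_contra hqp
      rw [Finsupp.mem_support_iff, Finsupp.single_apply_ne_zero] at hq
      exact hqp hq.1
    subst hqp
    rw [Nat.support_factorization]
    intro hmem
    exact hpc (Nat.dvd_of_mem_primeFactors hmem)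

lemma muInf_ne_zero (d : ℕ) : muInf d ≠ 0 := by
  rw [muInf, Finsupp.prod]
  apply Finset.prod_ne_zero_iff.mpr
  intro q _
  intro h
  have := pow_eq_zero_iff'.mp h
  norm_num at this

/-- `d` is an infinitary divisor of `n`: `d ∣ n` and for every prime `p`
the binary digits of the exponent of `p` in `d` are dominated by those in `n`. -/
def InfinitaryDvd (d n : ℕ) : Prop :=
  d ∣ n ∧ ∀ p : ℕ, d.factorization p &&& n.factorization p = d.factorization p

open scoped Classical in
/-- `μ∞` is the inverse of the constant function `1` under infinitary
convolution: `∑_{d |∞ n} μ∞(d)` is `1` for `n = 1` and `0` for `n > 1`. -/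
theorem sum_muInf_infinitaryDvd (n : ℕ) (hn : 1 ≤ n) :
    ∑ d ∈ n.divisors.filter (fun d => InfinitaryDvd d n), muInf d
      = if n = 1 then 1 else 0 := by
  by_cases h1 : n = 1
  · subst h1
    rw [if_pos rfl]
    have : Nat.divisors 1 = {1} := Nat.divisors_one
    rw [this]
    have h11 : InfinitaryDvd 1 1 := ⟨dvd_rfl, fun p => by simp⟩
    rw [Finset.filter_singleton, if_pos h11, Finset.sum_singleton]
    simp [muInf]
  · rw [if_neg h1]
    have hn0 : n ≠ 0 := by omega
    set p := n.minFac with hpdef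
    have hp : p.Prime := Nat.minFac_prime h1
    have hpn : p ∣ n := n.minFac_dvd
    have hν : n.factorization p ≠ 0 :=
      (hp.factorization_pos_of_dvd hn0 hpn).ne'
    obtain ⟨b, hb⟩ : ∃ b, (n.factorization p).testBit b = true := by
      by_contra hcon
      push_neg at hcon
      exact hν (Nat.zero_of_testBit_eq_false fun i =>
        Bool.not_eq_true _ |>.mp (hcon i))
    set k := 2 ^ b with hkdef
    -- description of elements of the filtered set
    have mem_iff : ∀ d, d ∈ n.divisors.filter (fun d => InfinitaryDvd d n) ↔
        (d ∣ n ∧ ∀ q, d.factorization q &&& n.factorization q = d.factorization q) := by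
      intro d
      rw [Finset.mem_filter, Nat.mem_divisors]
      constructor
      · rintro ⟨⟨h, _⟩, _, h3⟩; exact ⟨h, h3⟩
      · rintro ⟨h, h3⟩; exact ⟨⟨h, hn0⟩, h, h3⟩
    -- factorization of the involution image
    have fact_fac : ∀ d : ℕ, d ≠ 0 → ∀ j q,
        (ordCompl[p] d * p ^ j).factorization q =
          if q = p then j else d.factorization q := by
      intro d hd0 j q
      have hc0 : ordCompl[p] d ≠ 0 := (Nat.ordCompl_pos p hd0).ne'
      rw [Nat.factorization_mul hc0 (pow_ne_zero _ hp.pos.ne'), hp.factorization_pow,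
        Finsupp.add_apply, Nat.factorization_ordCompl, Finsupp.erase_apply,
        Finsupp.single_apply]
      by_cases h : q = p
      · simp [h]
      · simp [h, Ne.symm h]
    apply Finset.sum_involution
      (g := fun d _ => ordCompl[p] d * p ^ (d.factorization p ^^^ k))
    -- the sign property
    · intro d hd
      rw [mem_iff] at hd
      have hd0 : d ≠ 0 := fun h => hn0 (Nat.eq_zero_of_zero_dvd (h ▸ hd.1))
      have hc0 : ordCompl[p] d ≠ 0 := (Nat.ordCompl_pos p hd0).ne'
      have hpc : ¬ p ∣ ordCompl[p] d := Nat.not_dvd_ordCompl hp hd0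
      have hdeq : d = ordCompl[p] d * p ^ (d.factorization p) := by
        rw [mul_comm]; exact (Nat.ordProj_mul_ordCompl_eq_self d p).symm
      rw [muInf_mul_pow hp hc0 hpc, neg_one_s2_xor, s2_two_pow]
      nth_rewrite 1 [hdeq]
      rw [muInf_mul_pow hp hc0 hpc]
      ring
    · intro d hd _ hcon
      rw [mem_iff] at hd
      have hd0 : d ≠ 0 := fun h => hn0 (Nat.eq_zero_of_zero_dvd (h ▸ hd.1))
      have := congrArg (fun x => x.factorization p) hcon
      simp only [fact_fac d hd0, if_pos rfl] at this
      have := congrArg (fun x => x.testBit b) this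
      simp only [Nat.testBit_xor, hkdef, Nat.testBit_two_pow, decide_eq_true_eq] at this
      simp at this
    · intro d hd
      rw [mem_iff] at hd
      obtain ⟨hdn, hdall⟩ := hd
      have hd0 : d ≠ 0 := fun h => hn0 (Nat.eq_zero_of_zero_dvd (h ▸ hdn))
      have hc0 : ordCompl[p] d ≠ 0 := (Nat.ordCompl_pos p hd0).ne'
      have hg0 : ordCompl[p] d * p ^ (d.factorization p ^^^ k) ≠ 0 :=
        mul_ne_zero hc0 (pow_ne_zero _ hp.pos.ne')
      -- the new exponent at p is still a submask
      have hsub : (d.factorization p ^^^ k) &&& n.factorization p =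
          d.factorization p ^^^ k := by
        rw [submask_iff]
        intro i hi
        rw [Nat.testBit_xor, hkdef, Nat.testBit_two_pow] at hi
        by_cases hib : b = i
        · exact hib ▸ hb
        · rw [decide_eq_false hib] at hi
          simp only [Bool.bne_false] at hi
          exact submask_iff.mp (hdall p) i hi
      have hfacle : ∀ q, (ordCompl[p] d * p ^ (d.factorization p ^^^ k)).factorization q
          ≤ n.factorization q := by
        intro q
        rw [fact_fac d hd0]
        by_cases h : q = p
        · rw [if_pos h, h]; exact le_of_submask hsub
        · rw [if_neg h]
          exact (Nat.factorization_le_iff_dvd hd0 hn0).mpr hdn q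
      have hgdvd : ordCompl[p] d * p ^ (d.factorization p ^^^ k) ∣ n :=
        (Nat.factorization_le_iff_dvd hg0 hn0).mp (Finsupp.le_def.mpr hfacle)
      rw [mem_iff]
      refine ⟨hgdvd, fun q => ?_⟩
      rw [fact_fac d hd0]
      by_cases h : q = p
      · rw [if_pos h, h]; exact hsub
      · rw [if_neg h]; exact hdall q
    · intro d hd
      rw [mem_iff] at hd
      have hd0 : d ≠ 0 := fun h => hn0 (Nat.eq_zero_of_zero_dvd (h ▸ hd.1))
      have hfp : (ordCompl[p] d * p ^ (d.factorization p ^^^ k)).factorization p =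
          d.factorization p ^^^ k := by rw [fact_fac d hd0, if_pos rfl]
      have hcc : ordCompl[p] d * p ^ (d.factorization p ^^^ k) /
          p ^ (d.factorization p ^^^ k) = ordCompl[p] d :=
        Nat.mul_div_cancel _ (pow_pos hp.pos _)
      simp only [hfp, Nat.xor_xor_cancel_right, hcc]
      rw [mul_comm]
      exact Nat.ordProj_mul_ordCompl_eq_self d p
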